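/- arXiv:1907.10580 — 2 statements merged into one kernel-verified Lean document; each statement's English description precedes it below -/
import Mathlib

section
/- Chain rule decomposition for empowerment bound (Lemma 1, two-step case): for random variables Ω, S_0, S_1, S_2, A_1, A_2 where S_{t+1} is a (possibly stochastic) function of (S_t, A_t) and A_t depends on (Ω, S_t) only, it holds that I(Ω; S_2 | S_0) ≤ I(Ω; A_1 | S_1, S_0) + I(Ω; A_2 | S_2, S_0). -/
open Finset

/-- Conditional mutual information `I(X;Y|W)` of a joint pmf on `X × Y × W`. -/
noncomputable def cmi {X Y W : Type*} [Fintype X] [Fintype Y] [Fintype W]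
    (p : X → Y → W → ℝ) : ℝ :=
  ∑ x, ∑ y, ∑ w, p x y w *
    Real.log ((p x y w * ∑ x', ∑ y', p x' y' w) /
      ((∑ y', p x y' w) * (∑ x', p x' y w)))

lemma sub_le_mul_log {a b : ℝ} (ha : 0 < a) (hb : 0 < b) :
    a - b ≤ a * Real.log (a / b) := by
  have h := Real.log_le_sub_one_of_pos (div_pos hb ha)
  have hba : Real.log (b / a) = - Real.log (a / b) := by
    rw [← Real.log_inv, inv_div]
  rw [hba] at h
  have key : a * (b / a - 1) = b - a := by field_simp
  nlinarith [mul_le_mul_of_nonneg_left h ha.le]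

lemma key_term {a b : ℝ} (ha : 0 ≤ a) (hb : 0 ≤ b) (h : 0 < a → 0 < b) :
    a - b ≤ a * Real.log (a / b) := by
  rcases ha.lt_or_eq with ha' | ha'
  · exact sub_le_mul_log ha' (h ha')
  · rw [← ha']; simp; linarith

lemma pos_split {x y : ℝ} (hx : 0 ≤ x) (hy : 0 ≤ y) (h : 0 < x * y) :
    0 < x ∧ 0 < y := by
  rcases hx.lt_or_eq with h1 | h1
  · rcases hy.lt_or_eq with h2 | h2
    · exact ⟨h1, h2⟩
    · rw [← h2] at h; simp at h
  · rw [← h1] at h; simp at h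

lemma sum_rot3 {α β γ : Type*} [Fintype α] [Fintype β] [Fintype γ]
    {M : Type*} [AddCommMonoid M] (f : α → β → γ → M) :
    (∑ a, ∑ b, ∑ c, f a b c) = ∑ b, ∑ c, ∑ a, f a b c := by
  rw [Finset.sum_comm]
  exact Finset.sum_congr rfl fun b _ => Finset.sum_comm

lemma sum_rot4 {α β γ δ : Type*} [Fintype α] [Fintype β] [Fintype γ] [Fintype δ]
    {M : Type*} [AddCommMonoid M] (f : α → β → γ → δ → M) :
    (∑ a, ∑ b, ∑ c, ∑ d, f a b c d) = ∑ b, ∑ c, ∑ d, ∑ a, f a b c d := by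
  rw [Finset.sum_comm]
  exact Finset.sum_congr rfl fun b _ => sum_rot3 (fun a c d => f a b c d)

lemma sum_rot5 {α β γ δ ε : Type*} [Fintype α] [Fintype β] [Fintype γ] [Fintype δ] [Fintype ε]
    {M : Type*} [AddCommMonoid M] (f : α → β → γ → δ → ε → M) :
    (∑ a, ∑ b, ∑ c, ∑ d, ∑ e, f a b c d e) = ∑ b, ∑ c, ∑ d, ∑ e, ∑ a, f a b c d e := by
  rw [Finset.sum_comm]
  exact Finset.sum_congr rfl fun b _ => sum_rot4 (fun a c d e => f a b c d e)

lemma cmi_nonneg {X Y W : Type*} [Fintype X] [Fintype Y] [Fintype W]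
    (p : X → Y → W → ℝ) (hp : ∀ x y w, 0 ≤ p x y w) : 0 ≤ cmi p := by
  rw [cmi]
  rw [show ∀ f : X → Y → W → ℝ, (∑ x, ∑ y, ∑ w, f x y w) = ∑ w, ∑ x, ∑ y, f x y w
    from fun f => by
      calc (∑ x, ∑ y, ∑ w, f x y w)
          = ∑ x, ∑ w, ∑ y, f x y w := Finset.sum_congr rfl fun x _ => Finset.sum_comm
        _ = ∑ w, ∑ x, ∑ y, f x y w := Finset.sum_comm]
  refine Finset.sum_nonneg fun w _ => ?_
  set pw : ℝ := ∑ x', ∑ y', p x' y' w with hpw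
  have hpw0 : 0 ≤ pw := Finset.sum_nonneg fun x _ => Finset.sum_nonneg fun y _ => hp x y w
  rcases hpw0.lt_or_eq with hpos | hzero
  · -- pw > 0
    set S : ℝ := ∑ x, ∑ y, p x y w *
        Real.log ((p x y w * pw) / ((∑ y', p x y' w) * (∑ x', p x' y w))) with hS
    have hfact : pw * S = ∑ x, ∑ y, (p x y w * pw) *
        Real.log ((p x y w * pw) / ((∑ y', p x y' w) * (∑ x', p x' y w))) := by
      rw [hS, Finset.mul_sum]
      refine Finset.sum_congr rfl fun x _ => ?_
      rw [Finset.mul_sum]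
      exact Finset.sum_congr rfl fun y _ => by ring
    have hbound : ∀ x ∈ (univ : Finset X), ∀ y ∈ (univ : Finset Y),
        p x y w * pw - (∑ y', p x y' w) * (∑ x', p x' y w)
          ≤ (p x y w * pw) *
            Real.log ((p x y w * pw) / ((∑ y', p x y' w) * (∑ x', p x' y w))) := by
      intro x _ y _
      refine key_term (mul_nonneg (hp x y w) hpw0)
        (mul_nonneg (Finset.sum_nonneg fun y' _ => hp x y' w)
          (Finset.sum_nonneg fun x' _ => hp x' y w)) ?_
      intro hpos2
      have hppos : 0 < p x y w := by
        rcases (hp x y w).lt_or_eq with h' | h'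
        · exact h'
        · exfalso; rw [← h'] at hpos2; simp at hpos2
      exact mul_pos
        (lt_of_lt_of_le hppos (Finset.single_le_sum (fun y' _ => hp x y' w) (mem_univ y)))
        (lt_of_lt_of_le hppos (Finset.single_le_sum (fun x' _ => hp x' y w) (mem_univ x)))
    have hsum := Finset.sum_le_sum (fun x hx => Finset.sum_le_sum (hbound x hx))
    have heq : (∑ x, ∑ y, (p x y w * pw - (∑ y', p x y' w) * (∑ x', p x' y w))) = 0 := by
      simp only [Finset.sum_sub_distrib]
      have e1 : (∑ x, ∑ y, p x y w * pw) = pw * pw := by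
        simp_rw [← Finset.sum_mul]; rw [← hpw]
      have e2 : (∑ x, ∑ y : Y, (∑ y', p x y' w) * (∑ x', p x' y w)) = pw * pw := by
        simp_rw [← Finset.mul_sum]
        rw [← Finset.sum_mul]
        have e2a : (∑ y, ∑ x', p x' y w) = pw := by rw [hpw]; exact Finset.sum_comm
        rw [e2a, ← hpw]
      rw [e1, e2]; ring
    have hfin : pw * 0 ≤ pw * S := by
      rw [mul_zero, hfact]
      calc (0:ℝ) = ∑ x, ∑ y, (p x y w * pw - (∑ y', p x y' w) * (∑ x', p x' y w)) := heq.symm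
        _ ≤ _ := hsum
    exact le_of_mul_le_mul_left hfin hpos
  · -- pw = 0 : all p x y w = 0
    have hall : ∀ x y, p x y w = 0 := by
      intro x y
      have h1 : (∑ x', ∑ y', p x' y' w) = 0 := hzero.symm
      have h2 := (Finset.sum_eq_zero_iff_of_nonneg
        (fun x' _ => Finset.sum_nonneg fun y' _ => hp x' y' w)).mp h1 x (mem_univ x)
      exact (Finset.sum_eq_zero_iff_of_nonneg (fun y' _ => hp x y' w)).mp h2 y (mem_univ y)
    simp [hall]

section EmpowermentAux

variable {Ω St Ac : Type*} [Fintype Ω] [Fintype St] [Fintype Ac]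
variable (pΩ : Ω → ℝ) (p0 : St → ℝ) (T0 : St → St → ℝ)
  (π : Ω → St → Ac → ℝ) (T : St → Ac → St → ℝ)

noncomputable def qf (ω : Ω) (s0 s1 : St) (a1 : Ac) (s2 : St) : ℝ :=
  pΩ ω * p0 s0 * T0 s0 s1 * π ω s1 a1 * T s1 a1 s2

noncomputable def pLf (ω : Ω) (s2 s0 : St) : ℝ :=
  ∑ s1, ∑ a1, qf pΩ p0 T0 π T ω s0 s1 a1 s2

noncomputable def pimf (s1 : St) (a1 : Ac) : ℝ := ∑ ω, pΩ ω * π ω s1 a1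

noncomputable def pmf (s2 s0 : St) : ℝ := ∑ ω, pLf pΩ p0 T0 π T ω s2 s0

noncomputable def bf (ω : Ω) (s0 s1 : St) (a1 : Ac) (s2 : St) : ℝ :=
  p0 s0 * T0 s0 s1 * pimf pΩ π s1 a1 * T s1 a1 s2 *
    (pLf pΩ p0 T0 π T ω s2 s0 / pmf pΩ p0 T0 π T s2 s0)

noncomputable def p1f (ω : Ω) (a1 : Ac) (sw : St × St) : ℝ :=
  pΩ ω * p0 sw.2 * T0 sw.2 sw.1 * π ω sw.1 a1

noncomputable def LLf (ω : Ω) (s2 s0 : St) : ℝ :=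
  Real.log ((pLf pΩ p0 T0 π T ω s2 s0 * ∑ x', ∑ y', pLf pΩ p0 T0 π T x' y' s0) /
    ((∑ y', pLf pΩ p0 T0 π T ω y' s0) * (∑ x', pLf pΩ p0 T0 π T x' s2 s0)))

noncomputable def L1f (ω : Ω) (a1 : Ac) (s1 s0 : St) : ℝ :=
  Real.log ((p1f pΩ p0 T0 π ω a1 (s1, s0) * ∑ x', ∑ y', p1f pΩ p0 T0 π x' y' (s1, s0)) /
    ((∑ y', p1f pΩ p0 T0 π ω y' (s1, s0)) * (∑ x', p1f pΩ p0 T0 π x' a1 (s1, s0))))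

end EmpowermentAux

/-- Lemma 1, two-step case: for a trajectory generated by an option-conditioned
Markov policy `π(aₜ | ω, sₜ)` with transitions `S_{t+1} ⟂ Ω | (Sₜ, Aₜ)`,
`I(Ω; S₂ | S₀) ≤ I(Ω; A₁ | S₁, S₀) + I(Ω; A₂ | S₂, S₀)`. -/
theorem empowerment_two_step_bound
    {Ω St Ac : Type*} [Fintype Ω] [Fintype St] [Fintype Ac]
    (pΩ : Ω → ℝ) (hpΩ_nonneg : ∀ ω, 0 ≤ pΩ ω) (hpΩ_sum : ∑ ω, pΩ ω = 1)
    (p0 : St → ℝ) (hp0_nonneg : ∀ s, 0 ≤ p0 s) (hp0_sum : ∑ s, p0 s = 1)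
    -- initial transition `S₁ ~ T0(·|S₀)`, independent of Ω
    (T0 : St → St → ℝ) (hT0_nonneg : ∀ s s', 0 ≤ T0 s s')
    (hT0_sum : ∀ s, ∑ s', T0 s s' = 1)
    -- option-conditioned Markov policy `Aₜ ~ π(·|Ω, Sₜ)`
    (π : Ω → St → Ac → ℝ) (hπ_nonneg : ∀ ω s a, 0 ≤ π ω s a)
    (hπ_sum : ∀ ω s, ∑ a, π ω s a = 1)
    -- transition kernel `S_{t+1} ~ T(·|Sₜ, Aₜ)`, independent of Ω given (Sₜ,Aₜ)
    (T : St → Ac → St → ℝ) (hT_nonneg : ∀ s a s', 0 ≤ T s a s')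
    (hT_sum : ∀ s a, ∑ s', T s a s' = 1)
    -- full joint distribution of (Ω, S₀, S₁, A₁, S₂, A₂)
    (p : Ω → St → St → Ac → St → Ac → ℝ)
    (hp : ∀ ω s0 s1 a1 s2 a2,
      p ω s0 s1 a1 s2 a2
        = pΩ ω * p0 s0 * T0 s0 s1 * π ω s1 a1 * T s1 a1 s2 * π ω s2 a2) :
    cmi (fun ω s2 s0 => ∑ s1, ∑ a1, ∑ a2, p ω s0 s1 a1 s2 a2)
      ≤ cmi (fun ω a1 (sw : St × St) =>
            ∑ s2, ∑ a2, p ω sw.2 sw.1 a1 s2 a2)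
        + cmi (fun ω a2 (sw : St × St) =>
            ∑ s1, ∑ a1, p ω sw.2 s1 a1 sw.1 a2) := by
  -- basic nonnegativity facts
  have hqnn : ∀ ω s0 s1 a1 s2, 0 ≤ qf pΩ p0 T0 π T ω s0 s1 a1 s2 := by
    intro ω s0 s1 a1 s2
    exact mul_nonneg (mul_nonneg (mul_nonneg (mul_nonneg (hpΩ_nonneg ω) (hp0_nonneg s0))
      (hT0_nonneg s0 s1)) (hπ_nonneg ω s1 a1)) (hT_nonneg s1 a1 s2)
  have hpLnn : ∀ ω s2 s0, 0 ≤ pLf pΩ p0 T0 π T ω s2 s0 := fun ω s2 s0 =>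
    Finset.sum_nonneg fun s1 _ => Finset.sum_nonneg fun a1 _ => hqnn ω s0 s1 a1 s2
  have hpmnn : ∀ s2 s0, 0 ≤ pmf pΩ p0 T0 π T s2 s0 := fun s2 s0 =>
    Finset.sum_nonneg fun ω _ => hpLnn ω s2 s0
  have hπtnn : ∀ s1 a1, 0 ≤ pimf pΩ π s1 a1 := fun s1 a1 =>
    Finset.sum_nonneg fun ω _ => mul_nonneg (hpΩ_nonneg ω) (hπ_nonneg ω s1 a1)
  have hbnn : ∀ ω s0 s1 a1 s2, 0 ≤ bf pΩ p0 T0 π T ω s0 s1 a1 s2 := by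
    intro ω s0 s1 a1 s2
    exact mul_nonneg (mul_nonneg (mul_nonneg (mul_nonneg (hp0_nonneg s0) (hT0_nonneg s0 s1))
      (hπtnn s1 a1)) (hT_nonneg s1 a1 s2)) (div_nonneg (hpLnn ω s2 s0) (hpmnn s2 s0))
  -- rewrite joints
  have eJ1 : (fun ω s2 s0 => ∑ s1, ∑ a1, ∑ a2, p ω s0 s1 a1 s2 a2)
      = pLf pΩ p0 T0 π T := by
    funext ω s2 s0
    simp only [hp]
    simp_rw [← Finset.mul_sum, hπ_sum, mul_one]
    rfl
  have eJ2 : (fun ω a1 (sw : St × St) => ∑ s2, ∑ a2, p ω sw.2 sw.1 a1 s2 a2)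
      = p1f pΩ p0 T0 π := by
    funext ω a1 sw
    simp only [hp]
    simp_rw [← Finset.mul_sum, hπ_sum, mul_one]
    rw [← Finset.mul_sum, hT_sum, mul_one]
    rfl
  -- expand cmi of the LHS joint
  have hA : cmi (pLf pΩ p0 T0 π T)
      = ∑ ω, ∑ s0, ∑ s1, ∑ a1, ∑ s2,
          qf pΩ p0 T0 π T ω s0 s1 a1 s2 * LLf pΩ p0 T0 π T ω s2 s0 := by
    rw [cmi]
    trans (∑ ω, ∑ s2, ∑ s0, ∑ s1, ∑ a1,
        qf pΩ p0 T0 π T ω s0 s1 a1 s2 * LLf pΩ p0 T0 π T ω s2 s0)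
    · refine Finset.sum_congr rfl fun ω _ => Finset.sum_congr rfl fun s2 _ =>
        Finset.sum_congr rfl fun s0 _ => ?_
      show (∑ s1, ∑ a1, qf pΩ p0 T0 π T ω s0 s1 a1 s2) * LLf pΩ p0 T0 π T ω s2 s0 = _
      rw [Finset.sum_mul]
      exact Finset.sum_congr rfl fun s1 _ => Finset.sum_mul _ _ _
    · exact Finset.sum_congr rfl fun ω _ =>
        sum_rot4 (fun s2 s0 s1 a1 => qf pΩ p0 T0 π T ω s0 s1 a1 s2 * LLf pΩ p0 T0 π T ω s2 s0)
  -- marginal over s2 of qf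
  have hqm : ∀ ω a1 s1 s0, (∑ s2, qf pΩ p0 T0 π T ω s0 s1 a1 s2)
      = p1f pΩ p0 T0 π ω a1 (s1, s0) := by
    intro ω a1 s1 s0
    show (∑ s2, pΩ ω * p0 s0 * T0 s0 s1 * π ω s1 a1 * T s1 a1 s2) = _
    rw [← Finset.mul_sum, hT_sum, mul_one]
    rfl
  -- expand cmi of the first RHS joint
  have hB : cmi (p1f pΩ p0 T0 π)
      = ∑ ω, ∑ s0, ∑ s1, ∑ a1, ∑ s2,
          qf pΩ p0 T0 π T ω s0 s1 a1 s2 * L1f pΩ p0 T0 π ω a1 s1 s0 := by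
    rw [cmi]
    trans (∑ ω, ∑ a1, ∑ s1, ∑ s0, ∑ s2,
        qf pΩ p0 T0 π T ω s0 s1 a1 s2 * L1f pΩ p0 T0 π ω a1 s1 s0)
    · refine Finset.sum_congr rfl fun ω _ => Finset.sum_congr rfl fun a1 _ => ?_
      rw [Fintype.sum_prod_type]
      refine Finset.sum_congr rfl fun s1 _ => Finset.sum_congr rfl fun s0 _ => ?_
      show p1f pΩ p0 T0 π ω a1 (s1, s0) * L1f pΩ p0 T0 π ω a1 s1 s0 = _
      rw [← hqm ω a1 s1 s0, Finset.sum_mul]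
    · refine Finset.sum_congr rfl fun ω _ => ?_
      calc (∑ a1, ∑ s1, ∑ s0, ∑ s2,
              qf pΩ p0 T0 π T ω s0 s1 a1 s2 * L1f pΩ p0 T0 π ω a1 s1 s0)
          = ∑ s1, ∑ a1, ∑ s0, ∑ s2,
              qf pΩ p0 T0 π T ω s0 s1 a1 s2 * L1f pΩ p0 T0 π ω a1 s1 s0 := Finset.sum_comm
        _ = ∑ s1, ∑ s0, ∑ a1, ∑ s2,
              qf pΩ p0 T0 π T ω s0 s1 a1 s2 * L1f pΩ p0 T0 π ω a1 s1 s0 :=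
            Finset.sum_congr rfl fun s1 _ => Finset.sum_comm
        _ = ∑ s0, ∑ s1, ∑ a1, ∑ s2,
              qf pΩ p0 T0 π T ω s0 s1 a1 s2 * L1f pΩ p0 T0 π ω a1 s1 s0 := Finset.sum_comm
  -- marginals of pLf
  have hMx : ∀ ω s0, (∑ s2, pLf pΩ p0 T0 π T ω s2 s0) = pΩ ω * p0 s0 := by
    intro ω s0
    calc (∑ s2, pLf pΩ p0 T0 π T ω s2 s0)
        = ∑ s2, ∑ s1, ∑ a1, qf pΩ p0 T0 π T ω s0 s1 a1 s2 := rfl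
      _ = ∑ s1, ∑ a1, ∑ s2, qf pΩ p0 T0 π T ω s0 s1 a1 s2 :=
          sum_rot3 (fun s2 s1 a1 => qf pΩ p0 T0 π T ω s0 s1 a1 s2)
      _ = ∑ s1, ∑ a1, p1f pΩ p0 T0 π ω a1 (s1, s0) :=
          Finset.sum_congr rfl fun s1 _ => Finset.sum_congr rfl fun a1 _ => hqm ω a1 s1 s0
      _ = pΩ ω * p0 s0 := by
          show (∑ s1, ∑ a1, pΩ ω * p0 s0 * T0 s0 s1 * π ω s1 a1) = _
          have inner : ∀ s1, (∑ a1, pΩ ω * p0 s0 * T0 s0 s1 * π ω s1 a1)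
              = pΩ ω * p0 s0 * T0 s0 s1 := fun s1 => by
            rw [← Finset.mul_sum, hπ_sum, mul_one]
          simp only [inner]
          rw [← Finset.mul_sum, hT0_sum, mul_one]
  have hM0 : ∀ s0, (∑ x', ∑ y', pLf pΩ p0 T0 π T x' y' s0) = p0 s0 := by
    intro s0
    calc (∑ x', ∑ y', pLf pΩ p0 T0 π T x' y' s0)
        = ∑ x', pΩ x' * p0 s0 := Finset.sum_congr rfl fun x' _ => hMx x' s0
      _ = p0 s0 := by rw [← Finset.sum_mul, hpΩ_sum, one_mul]
  have hMy : ∀ s2 s0, (∑ x', pLf pΩ p0 T0 π T x' s2 s0) = pmf pΩ p0 T0 π T s2 s0 :=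
    fun _ _ => rfl
  -- marginals of p1f
  have hNx : ∀ ω s1 s0, (∑ y', p1f pΩ p0 T0 π ω y' (s1, s0)) = pΩ ω * p0 s0 * T0 s0 s1 := by
    intro ω s1 s0
    show (∑ y', pΩ ω * p0 s0 * T0 s0 s1 * π ω s1 y') = _
    rw [← Finset.mul_sum, hπ_sum, mul_one]
  have hNy : ∀ a1 s1 s0, (∑ x', p1f pΩ p0 T0 π x' a1 (s1, s0))
      = p0 s0 * T0 s0 s1 * pimf pΩ π s1 a1 := by
    intro a1 s1 s0
    show (∑ x', pΩ x' * p0 s0 * T0 s0 s1 * π x' s1 a1) = _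
    calc (∑ x', pΩ x' * p0 s0 * T0 s0 s1 * π x' s1 a1)
        = ∑ x', p0 s0 * T0 s0 s1 * (pΩ x' * π x' s1 a1) :=
          Finset.sum_congr rfl fun x' _ => by ring
      _ = p0 s0 * T0 s0 s1 * ∑ x', pΩ x' * π x' s1 a1 := by rw [← Finset.mul_sum]
      _ = _ := rfl
  have hN0 : ∀ s1 s0, (∑ x', ∑ y', p1f pΩ p0 T0 π x' y' (s1, s0)) = p0 s0 * T0 s0 s1 := by
    intro s1 s0
    calc (∑ x', ∑ y', p1f pΩ p0 T0 π x' y' (s1, s0))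
        = ∑ x', pΩ x' * p0 s0 * T0 s0 s1 := Finset.sum_congr rfl fun x' _ => hNx x' s1 s0
      _ = p0 s0 * T0 s0 s1 := by
          rw [← Finset.sum_mul, ← Finset.sum_mul, hpΩ_sum, one_mul]
-- total mass of q is 1
  have hq_inner : ∀ ω s0, (∑ s1, ∑ a1, ∑ s2, qf pΩ p0 T0 π T ω s0 s1 a1 s2)
      = pΩ ω * p0 s0 := by
    intro ω s0
    have i1 : ∀ s1 a1, (∑ s2, qf pΩ p0 T0 π T ω s0 s1 a1 s2)
        = pΩ ω * p0 s0 * T0 s0 s1 * π ω s1 a1 := by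
      intro s1 a1
      show (∑ s2, pΩ ω * p0 s0 * T0 s0 s1 * π ω s1 a1 * T s1 a1 s2) = _
      rw [← Finset.mul_sum, hT_sum, mul_one]
    simp only [i1]
    have i2 : ∀ s1, (∑ a1, pΩ ω * p0 s0 * T0 s0 s1 * π ω s1 a1)
        = pΩ ω * p0 s0 * T0 s0 s1 := fun s1 => by
      rw [← Finset.mul_sum, hπ_sum, mul_one]
    simp only [i2]
    rw [← Finset.mul_sum, hT0_sum, mul_one]
  have hqsum : (∑ ω, ∑ s0, ∑ s1, ∑ a1, ∑ s2, qf pΩ p0 T0 π T ω s0 s1 a1 s2) = 1 := by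
    simp only [hq_inner]
    have i3 : ∀ ω, (∑ s0, pΩ ω * p0 s0) = pΩ ω := fun ω => by
      rw [← Finset.mul_sum, hp0_sum, mul_one]
    simp only [i3]
    exact hpΩ_sum
  -- total mass of b is at most 1
  have hπt_sum : ∀ s1, (∑ a1, pimf pΩ π s1 a1) = 1 := by
    intro s1
    show (∑ a1, ∑ ω, pΩ ω * π ω s1 a1) = 1
    rw [Finset.sum_comm]
    have i1 : ∀ ω, (∑ a1, pΩ ω * π ω s1 a1) = pΩ ω := fun ω => by
      rw [← Finset.mul_sum, hπ_sum, mul_one]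
    simp only [i1]
    exact hpΩ_sum
  have hbsum : (∑ ω, ∑ s0, ∑ s1, ∑ a1, ∑ s2, bf pΩ p0 T0 π T ω s0 s1 a1 s2) ≤ 1 := by
    rw [sum_rot5 (bf pΩ p0 T0 π T)]
    have step1 : (∑ s0, ∑ s1, ∑ a1, ∑ s2, ∑ ω, bf pΩ p0 T0 π T ω s0 s1 a1 s2)
        ≤ ∑ s0, ∑ s1, ∑ a1, ∑ s2, p0 s0 * T0 s0 s1 * pimf pΩ π s1 a1 * T s1 a1 s2 := by
      refine Finset.sum_le_sum fun s0 _ => Finset.sum_le_sum fun s1 _ =>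
        Finset.sum_le_sum fun a1 _ => Finset.sum_le_sum fun s2 _ => ?_
      show (∑ ω, p0 s0 * T0 s0 s1 * pimf pΩ π s1 a1 * T s1 a1 s2 *
          (pLf pΩ p0 T0 π T ω s2 s0 / pmf pΩ p0 T0 π T s2 s0)) ≤ _
      rw [← Finset.mul_sum, ← Finset.sum_div]
      rw [show (∑ ω, pLf pΩ p0 T0 π T ω s2 s0) = pmf pΩ p0 T0 π T s2 s0 from rfl]
      rcases (hpmnn s2 s0).lt_or_eq with hpm | hpm
      · rw [div_self hpm.ne', mul_one]
      · rw [← hpm, div_zero, mul_zero]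
        exact mul_nonneg (mul_nonneg (mul_nonneg (hp0_nonneg s0) (hT0_nonneg s0 s1))
          (hπtnn s1 a1)) (hT_nonneg s1 a1 s2)
    refine le_trans step1 (le_of_eq ?_)
    have i1 : ∀ s0 s1 a1, (∑ s2, p0 s0 * T0 s0 s1 * pimf pΩ π s1 a1 * T s1 a1 s2)
        = p0 s0 * T0 s0 s1 * pimf pΩ π s1 a1 := fun s0 s1 a1 => by
      rw [← Finset.mul_sum, hT_sum, mul_one]
    simp only [i1]
    have i2 : ∀ s0 s1, (∑ a1, p0 s0 * T0 s0 s1 * pimf pΩ π s1 a1)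
        = p0 s0 * T0 s0 s1 := fun s0 s1 => by
      rw [← Finset.mul_sum, hπt_sum, mul_one]
    simp only [i2]
    have i3 : ∀ s0, (∑ s1, p0 s0 * T0 s0 s1) = p0 s0 := fun s0 => by
      rw [← Finset.mul_sum, hT0_sum, mul_one]
    simp only [i3]
    exact hp0_sum
-- pointwise comparison
  have hpoint : ∀ ω s0 s1 a1 s2,
      qf pΩ p0 T0 π T ω s0 s1 a1 s2 * LLf pΩ p0 T0 π T ω s2 s0
        - qf pΩ p0 T0 π T ω s0 s1 a1 s2 * L1f pΩ p0 T0 π ω a1 s1 s0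
      ≤ bf pΩ p0 T0 π T ω s0 s1 a1 s2 - qf pΩ p0 T0 π T ω s0 s1 a1 s2 := by
    intro ω s0 s1 a1 s2
    rcases (hqnn ω s0 s1 a1 s2).lt_or_eq with hqpos | hq0
    · -- positive case
      have hq5 : 0 < pΩ ω * p0 s0 * T0 s0 s1 * π ω s1 a1 * T s1 a1 s2 := hqpos
      obtain ⟨h4, hTp⟩ := pos_split
        (mul_nonneg (mul_nonneg (mul_nonneg (hpΩ_nonneg ω) (hp0_nonneg s0))
          (hT0_nonneg s0 s1)) (hπ_nonneg ω s1 a1)) (hT_nonneg s1 a1 s2) hq5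
      obtain ⟨h3', hπp⟩ := pos_split
        (mul_nonneg (mul_nonneg (hpΩ_nonneg ω) (hp0_nonneg s0)) (hT0_nonneg s0 s1))
        (hπ_nonneg ω s1 a1) h4
      obtain ⟨h2', hT0p⟩ := pos_split (mul_nonneg (hpΩ_nonneg ω) (hp0_nonneg s0))
        (hT0_nonneg s0 s1) h3'
      obtain ⟨hpΩp, hp0p⟩ := pos_split (hpΩ_nonneg ω) (hp0_nonneg s0) h2'
      have hπtp : 0 < pimf pΩ π s1 a1 :=
        lt_of_lt_of_le (mul_pos hpΩp hπp) (Finset.single_le_sum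
          (fun ω' _ => mul_nonneg (hpΩ_nonneg ω') (hπ_nonneg ω' s1 a1)) (mem_univ ω))
      have hpLp : 0 < pLf pΩ p0 T0 π T ω s2 s0 := by
        refine lt_of_lt_of_le hqpos (le_trans
          (Finset.single_le_sum (fun a1' _ => hqnn ω s0 s1 a1' s2) (mem_univ a1)) ?_)
        exact Finset.single_le_sum
          (fun s1' _ => Finset.sum_nonneg fun a1' _ => hqnn ω s0 s1' a1' s2) (mem_univ s1)
      have hpmp : 0 < pmf pΩ p0 T0 π T s2 s0 :=
        lt_of_lt_of_le hpLp (Finset.single_le_sum (fun ω' _ => hpLnn ω' s2 s0) (mem_univ ω))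
      have hbp : 0 < bf pΩ p0 T0 π T ω s0 s1 a1 s2 := by
        show 0 < p0 s0 * T0 s0 s1 * pimf pΩ π s1 a1 * T s1 a1 s2 *
          (pLf pΩ p0 T0 π T ω s2 s0 / pmf pΩ p0 T0 π T s2 s0)
        exact mul_pos (mul_pos (mul_pos (mul_pos hp0p hT0p) hπtp) hTp)
          (div_pos hpLp hpmp)
      have eLL : LLf pΩ p0 T0 π T ω s2 s0
          = Real.log (pLf pΩ p0 T0 π T ω s2 s0 * p0 s0 /
              (pΩ ω * p0 s0 * pmf pΩ p0 T0 π T s2 s0)) := by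
        simp only [LLf]
        rw [hM0 s0, hMx ω s0, hMy s2 s0]
      have eL1 : L1f pΩ p0 T0 π ω a1 s1 s0
          = Real.log ((pΩ ω * p0 s0 * T0 s0 s1 * π ω s1 a1) * (p0 s0 * T0 s0 s1) /
              ((pΩ ω * p0 s0 * T0 s0 s1) * (p0 s0 * T0 s0 s1 * pimf pΩ π s1 a1))) := by
        simp only [L1f]
        rw [hN0 s1 s0, hNx ω s1 s0, hNy a1 s1 s0]
        rw [show p1f pΩ p0 T0 π ω a1 (s1, s0)
          = pΩ ω * p0 s0 * T0 s0 s1 * π ω s1 a1 from rfl]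
      have hArgLpos : 0 < pLf pΩ p0 T0 π T ω s2 s0 * p0 s0 /
          (pΩ ω * p0 s0 * pmf pΩ p0 T0 π T s2 s0) :=
        div_pos (mul_pos hpLp hp0p) (mul_pos (mul_pos hpΩp hp0p) hpmp)
      have hArg1pos : 0 < (pΩ ω * p0 s0 * T0 s0 s1 * π ω s1 a1) * (p0 s0 * T0 s0 s1) /
          ((pΩ ω * p0 s0 * T0 s0 s1) * (p0 s0 * T0 s0 s1 * pimf pΩ π s1 a1)) :=
        div_pos (mul_pos h4 (mul_pos hp0p hT0p))
          (mul_pos h3' (mul_pos (mul_pos hp0p hT0p) hπtp))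
      have n1 := hpΩp.ne'
      have n2 := hp0p.ne'
      have n3 := hT0p.ne'
      have n4 := hπtp.ne'
      have n5 := hTp.ne'
      have n6 := hpLp.ne'
      have n7 := hpmp.ne'
      have hratio : ((pΩ ω * p0 s0 * T0 s0 s1 * π ω s1 a1) * (p0 s0 * T0 s0 s1) /
            ((pΩ ω * p0 s0 * T0 s0 s1) * (p0 s0 * T0 s0 s1 * pimf pΩ π s1 a1))) /
          (pLf pΩ p0 T0 π T ω s2 s0 * p0 s0 /
            (pΩ ω * p0 s0 * pmf pΩ p0 T0 π T s2 s0))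
          = qf pΩ p0 T0 π T ω s0 s1 a1 s2 / bf pΩ p0 T0 π T ω s0 s1 a1 s2 := by
        rw [show qf pΩ p0 T0 π T ω s0 s1 a1 s2
            = pΩ ω * p0 s0 * T0 s0 s1 * π ω s1 a1 * T s1 a1 s2 from rfl]
        rw [show bf pΩ p0 T0 π T ω s0 s1 a1 s2
            = p0 s0 * T0 s0 s1 * pimf pΩ π s1 a1 * T s1 a1 s2 *
              (pLf pΩ p0 T0 π T ω s2 s0 / pmf pΩ p0 T0 π T s2 s0) from rfl]
        field_simp
      have hlog : Real.log ((pΩ ω * p0 s0 * T0 s0 s1 * π ω s1 a1) * (p0 s0 * T0 s0 s1) /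
            ((pΩ ω * p0 s0 * T0 s0 s1) * (p0 s0 * T0 s0 s1 * pimf pΩ π s1 a1)))
          - Real.log (pLf pΩ p0 T0 π T ω s2 s0 * p0 s0 /
            (pΩ ω * p0 s0 * pmf pΩ p0 T0 π T s2 s0))
          = Real.log (qf pΩ p0 T0 π T ω s0 s1 a1 s2 / bf pΩ p0 T0 π T ω s0 s1 a1 s2) := by
        rw [← Real.log_div (ne_of_gt hArg1pos) (ne_of_gt hArgLpos), hratio]
      rw [eLL, eL1]
      have hfin := sub_le_mul_log hqpos hbp
      nlinarith [mul_le_mul_of_nonneg_left (le_of_eq hlog) hqpos.le,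
        mul_le_mul_of_nonneg_left (le_of_eq hlog.symm) hqpos.le]
    · -- q = 0 case
      rw [← hq0]
      simp only [zero_mul, sub_zero, sub_self]
      have := hbnn ω s0 s1 a1 s2
      linarith
  -- sum the pointwise bound
  have hkey : (∑ ω, ∑ s0, ∑ s1, ∑ a1, ∑ s2,
        (qf pΩ p0 T0 π T ω s0 s1 a1 s2 * LLf pΩ p0 T0 π T ω s2 s0
          - qf pΩ p0 T0 π T ω s0 s1 a1 s2 * L1f pΩ p0 T0 π ω a1 s1 s0))
      ≤ ∑ ω, ∑ s0, ∑ s1, ∑ a1, ∑ s2,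
        (bf pΩ p0 T0 π T ω s0 s1 a1 s2 - qf pΩ p0 T0 π T ω s0 s1 a1 s2) :=
    Finset.sum_le_sum fun ω _ => Finset.sum_le_sum fun s0 _ =>
      Finset.sum_le_sum fun s1 _ => Finset.sum_le_sum fun a1 _ =>
        Finset.sum_le_sum fun s2 _ => hpoint ω s0 s1 a1 s2
  simp only [Finset.sum_sub_distrib] at hkey
  -- the second cmi term is nonneg
  have h3 : 0 ≤ cmi (fun ω a2 (sw : St × St) => ∑ s1, ∑ a1, p ω sw.2 s1 a1 sw.1 a2) := by
    refine cmi_nonneg _ fun x y w => Finset.sum_nonneg fun s1 _ =>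
      Finset.sum_nonneg fun a1 _ => ?_
    rw [hp]
    exact mul_nonneg (mul_nonneg (mul_nonneg (mul_nonneg (mul_nonneg (hpΩ_nonneg x)
      (hp0_nonneg w.2)) (hT0_nonneg w.2 s1)) (hπ_nonneg x s1 a1)) (hT_nonneg s1 a1 w.1))
      (hπ_nonneg x w.1 y)
  rw [eJ1, eJ2, hA, hB]
  linarith
end

section
/- For a Markov policy, conditioning on the past actions can be replaced by conditioning on the current state: if A_t is conditionally independent of (A_1,...,A_{t-1}) given (Ω, S_t, S_0), and S_t is a function of (S_0, A_1,...,A_{t-1}), then I(Ω; A_t | A_1,...,A_{t-1}, S_0) ≤ I(Ω; A_t | S_t, S_0) + I(A_t; A_1,...,A_{t-1} | Ω, S_t, S_0), where the last term vanishes, giving I(Ω; A_t | A_{1:t-1}, S_0) ≤ I(Ω; A_t | S_t, S_0). -/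
open Finset

section AuxLemmas

set_option linter.unusedSectionVars false
set_option maxHeartbeats 1000000

lemma ite_nonneg' {c : Prop} [Decidable c] {x : ℝ} (hx : 0 ≤ x) : 0 ≤ if c then x else 0 := by
  split <;> simp [hx]

lemma aux_log_ge {t : ℝ} (ht : 0 < t) : 1 - 1/t ≤ Real.log t := by
  have h := Real.log_le_sub_one_of_pos (show (0:ℝ) < 1/t by positivity)
  have h2 : Real.log (1/t) = - Real.log t := by rw [one_div, Real.log_inv]
  linarith

lemma aux_mul_div_le {b x y : ℝ} (hb : 0 ≤ b) (hx : 0 ≤ x) (hy : 0 ≤ y) :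
    b * (x / (y * b)) ≤ x / y := by
  rcases eq_or_lt_of_le hb with hb0 | hb0
  · rw [← hb0, zero_mul]; positivity
  rcases eq_or_lt_of_le hy with hy0 | hy0
  · rw [← hy0, zero_mul, div_zero, mul_zero]
  have : b * (x / (y * b)) = x / y := by field_simp
  rw [this]

lemma aux_mul_div_le' {x y : ℝ} (hx : 0 ≤ x) (hy : 0 ≤ y) : y * (x / y) ≤ x := by
  rcases eq_or_lt_of_le hy with hy0 | hy0
  · rw [← hy0, zero_mul]; exact hx
  rw [mul_div_cancel₀ _ (ne_of_gt hy0)]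

lemma sum_comm3 {α β γ : Type*} [Fintype α] [Fintype β] [Fintype γ] (F : α → β → γ → ℝ) :
    ∑ a, ∑ b, ∑ c, F a b c = ∑ b, ∑ c, ∑ a, F a b c :=
  calc ∑ a, ∑ b, ∑ c, F a b c = ∑ b, ∑ a, ∑ c, F a b c := Finset.sum_comm
    _ = ∑ b, ∑ c, ∑ a, F a b c := Finset.sum_congr rfl fun _ _ => Finset.sum_comm

variable {Ω Pa A S0 St : Type*}
variable [Fintype Ω] [Fintype Pa] [Fintype A] [Fintype S0] [Fintype St] [DecidableEq St]
variable (f : S0 → Pa → St) (p : Ω → Pa → A → S0 → ℝ)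

/-- `A`-marginal sum (conditional weight of `(ω, pa, s0)`). -/
noncomputable def mAw (ω : Ω) (pa : Pa) (s0 : S0) : ℝ := ∑ a, p ω pa a s0
/-- `Ω`-marginal sum. -/
noncomputable def mBa (a : A) (pa : Pa) (s0 : S0) : ℝ := ∑ ω, p ω pa a s0
/-- weight of `(pa, s0)`. -/
noncomputable def mN (pa : Pa) (s0 : S0) : ℝ := ∑ ω, ∑ a, p ω pa a s0
/-- joint of `(ω, a, st, s0)`. -/
noncomputable def mM (ω : Ω) (a : A) (st : St) (s0 : S0) : ℝ :=
  ∑ pa, if f s0 pa = st then p ω pa a s0 else 0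
noncomputable def mAw' (ω : Ω) (st : St) (s0 : S0) : ℝ :=
  ∑ pa, if f s0 pa = st then mAw p ω pa s0 else 0
noncomputable def mBa' (a : A) (st : St) (s0 : S0) : ℝ :=
  ∑ pa, if f s0 pa = st then mBa p a pa s0 else 0
noncomputable def mN' (st : St) (s0 : S0) : ℝ :=
  ∑ pa, if f s0 pa = st then mN p pa s0 else 0
/-- the log-term of the state-conditioned cmi. -/
noncomputable def mG (ω : Ω) (a : A) (st : St) (s0 : S0) : ℝ :=
  Real.log ((mM f p ω a st s0 * mN' f p st s0) / (mAw' f p ω st s0 * mBa' f p a st s0))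
/-- the correction ratio. -/
noncomputable def mc (a : A) (pa : Pa) (s0 : S0) : ℝ :=
  (mN p pa s0 * mBa' f p a (f s0 pa) s0) / (mN' f p (f s0 pa) s0 * mBa p a pa s0)

variable (hp_nonneg : ∀ ω pa a s0, 0 ≤ p ω pa a s0)

section Pos
include hp_nonneg
lemma mAw_nonneg (ω pa s0) : 0 ≤ mAw p ω pa s0 :=
  Finset.sum_nonneg fun _ _ => hp_nonneg _ _ _ _
lemma mBa_nonneg (a pa s0) : 0 ≤ mBa p a pa s0 :=
  Finset.sum_nonneg fun _ _ => hp_nonneg _ _ _ _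
lemma mN_nonneg (pa s0) : 0 ≤ mN p pa s0 :=
  Finset.sum_nonneg fun _ _ => Finset.sum_nonneg fun _ _ => hp_nonneg _ _ _ _
lemma mBa'_nonneg (a st s0) : 0 ≤ mBa' f p a st s0 :=
  Finset.sum_nonneg fun _ _ => ite_nonneg' (mBa_nonneg p hp_nonneg _ _ _)
lemma mN'_nonneg (st s0) : 0 ≤ mN' f p st s0 :=
  Finset.sum_nonneg fun _ _ => ite_nonneg' (mN_nonneg p hp_nonneg _ _)
variable {p}
lemma le_mAw (ω pa a s0) : p ω pa a s0 ≤ mAw p ω pa s0 :=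
  Finset.single_le_sum (fun a _ => hp_nonneg ω pa a s0) (mem_univ a)
lemma le_mBa (ω pa a s0) : p ω pa a s0 ≤ mBa p a pa s0 :=
  Finset.single_le_sum (fun ω _ => hp_nonneg ω pa a s0) (mem_univ ω)
lemma mAw_le_mN (ω pa s0) : mAw p ω pa s0 ≤ mN p pa s0 :=
  Finset.single_le_sum (fun ω _ => mAw_nonneg p hp_nonneg ω pa s0) (mem_univ ω)
lemma le_mM (ω pa a s0) : p ω pa a s0 ≤ mM f p ω a (f s0 pa) s0 := by
  have h := Finset.single_le_sum (f := fun pa' => if f s0 pa' = f s0 pa then p ω pa' a s0 else 0)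
    (fun pa' _ => ite_nonneg' (hp_nonneg ω pa' a s0)) (mem_univ pa)
  simpa [mM] using h
lemma mAw_le_mAw' (ω pa s0) : mAw p ω pa s0 ≤ mAw' f p ω (f s0 pa) s0 := by
  have h := Finset.single_le_sum (f := fun pa' => if f s0 pa' = f s0 pa then mAw p ω pa' s0 else 0)
    (fun pa' _ => ite_nonneg' (mAw_nonneg p hp_nonneg ω pa' s0)) (mem_univ pa)
  simpa [mAw'] using h
lemma mBa_le_mBa' (a pa s0) : mBa p a pa s0 ≤ mBa' f p a (f s0 pa) s0 := by
  have h := Finset.single_le_sum (f := fun pa' => if f s0 pa' = f s0 pa then mBa p a pa' s0 else 0)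
    (fun pa' _ => ite_nonneg' (mBa_nonneg p hp_nonneg a pa' s0)) (mem_univ pa)
  simpa [mBa'] using h
lemma mN_le_mN' (pa s0) : mN p pa s0 ≤ mN' f p (f s0 pa) s0 := by
  have h := Finset.single_le_sum (f := fun pa' => if f s0 pa' = f s0 pa then mN p pa' s0 else 0)
    (fun pa' _ => ite_nonneg' (mN_nonneg p hp_nonneg pa' s0)) (mem_univ pa)
  simpa [mN'] using h
end Pos

/-- Key identity from the Markov property:
`M(ω,a,st,s0) · Aω(ω,pa,s0) = p(ω,pa,a,s0) · Aω'(ω,st,s0)` for `st = f s0 pa`. -/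
lemma key_identity
    (hmarkov : ∀ ω pa pa' a s0, f s0 pa = f s0 pa' →
      p ω pa a s0 * (∑ a', p ω pa' a' s0) = p ω pa' a s0 * (∑ a', p ω pa a' s0))
    (ω : Ω) (a : A) (pa : Pa) (s0 : S0) :
    mM f p ω a (f s0 pa) s0 * mAw p ω pa s0 = p ω pa a s0 * mAw' f p ω (f s0 pa) s0 := by
  rw [mM, mAw', Finset.sum_mul, Finset.mul_sum]
  refine Finset.sum_congr rfl fun pa' _ => ?_
  by_cases h : f s0 pa' = f s0 pa
  · simp only [h, if_true]
    have := hmarkov ω pa pa' a s0 h.symm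
    rw [mAw, mAw]
    linarith [this]
  · simp [h]

/-- Unfolding of the past-conditioned cmi. -/
lemma hq1_eq : cmi (fun ω a (w : Pa × S0) => p ω w.1 a w.2)
    = ∑ ω, ∑ a, ∑ pa, ∑ s0, p ω pa a s0 *
        Real.log ((p ω pa a s0 * mN p pa s0) / (mAw p ω pa s0 * mBa p a pa s0)) := by
  rw [cmi]
  simp only [Fintype.sum_prod_type]
  rfl

/-- Unfolding of the state-conditioned cmi as a sum over `(ω, a, pa, s0)`. -/
lemma hS_eq : cmi (fun ω a (w : St × S0) => ∑ pa, if f w.2 pa = w.1 then p ω pa a w.2 else 0)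
    = ∑ ω, ∑ a, ∑ pa, ∑ s0, p ω pa a s0 * mG f p ω a (f s0 pa) s0 := by
  rw [cmi]
  simp only [Fintype.sum_prod_type]
  refine Finset.sum_congr rfl fun ω _ => Finset.sum_congr rfl fun a _ => ?_
  have e1 : ∀ st s0, (∑ x' : Ω, ∑ y' : A, ∑ pa, if f s0 pa = st then p x' pa y' s0 else 0)
      = mN' f p st s0 := by
    intro st s0
    rw [mN']
    calc (∑ x' : Ω, ∑ y' : A, ∑ pa, if f s0 pa = st then p x' pa y' s0 else 0)
        = ∑ x' : Ω, ∑ pa, ∑ y' : A, if f s0 pa = st then p x' pa y' s0 else 0 :=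
          Finset.sum_congr rfl fun _ _ => Finset.sum_comm
      _ = ∑ pa, ∑ x' : Ω, ∑ y' : A, if f s0 pa = st then p x' pa y' s0 else 0 :=
          Finset.sum_comm
      _ = ∑ pa, if f s0 pa = st then mN p pa s0 else 0 := by
          refine Finset.sum_congr rfl fun pa _ => ?_
          by_cases hc : f s0 pa = st <;> simp [hc, mN]
  have e2 : ∀ st s0, (∑ y' : A, ∑ pa, if f s0 pa = st then p ω pa y' s0 else 0)
      = mAw' f p ω st s0 := by
    intro st s0
    rw [mAw', Finset.sum_comm]
    refine Finset.sum_congr rfl fun pa _ => ?_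
    by_cases hc : f s0 pa = st <;> simp [hc, mAw]
  have e3 : ∀ st s0, (∑ x' : Ω, ∑ pa, if f s0 pa = st then p x' pa a s0 else 0)
      = mBa' f p a st s0 := by
    intro st s0
    rw [mBa', Finset.sum_comm]
    refine Finset.sum_congr rfl fun pa _ => ?_
    by_cases hc : f s0 pa = st <;> simp [hc, mBa]
  calc (∑ st, ∑ s0, (∑ pa, if f s0 pa = st then p ω pa a s0 else 0) *
          Real.log (((∑ pa, if f s0 pa = st then p ω pa a s0 else 0) *
              ∑ x', ∑ y', ∑ pa, if f s0 pa = st then p x' pa y' s0 else 0) /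
            ((∑ y', ∑ pa, if f s0 pa = st then p ω pa y' s0 else 0) *
              (∑ x', ∑ pa, if f s0 pa = st then p x' pa a s0 else 0))))
      = ∑ st, ∑ s0, mM f p ω a st s0 * mG f p ω a st s0 := by
        refine Finset.sum_congr rfl fun st _ => Finset.sum_congr rfl fun s0 _ => ?_
        rw [e1, e2, e3, mG, mM]
    _ = ∑ s0, ∑ st, mM f p ω a st s0 * mG f p ω a st s0 := Finset.sum_comm
    _ = ∑ s0, ∑ pa, p ω pa a s0 * mG f p ω a (f s0 pa) s0 := by
        refine Finset.sum_congr rfl fun s0 _ => ?_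
        rw [show (∑ st, mM f p ω a st s0 * mG f p ω a st s0)
            = ∑ st, ∑ pa, if f s0 pa = st then p ω pa a s0 * mG f p ω a st s0 else 0 by
          refine Finset.sum_congr rfl fun st _ => ?_
          rw [mM, Finset.sum_mul]
          exact Finset.sum_congr rfl fun pa _ => by
            by_cases hc : f s0 pa = st <;> simp [hc]]
        rw [Finset.sum_comm]
        refine Finset.sum_congr rfl fun pa _ => ?_
        simp
    _ = ∑ pa, ∑ s0, p ω pa a s0 * mG f p ω a (f s0 pa) s0 := Finset.sum_comm

include hp_nonneg in
/-- The Markov cmi term `I(Aₜ; A_{1:t-1} | Ω, Sₜ, S₀)` vanishes. -/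
lemma markov_cmi_zero
    (hmarkov : ∀ ω pa pa' a s0, f s0 pa = f s0 pa' →
      p ω pa a s0 * (∑ a', p ω pa' a' s0) = p ω pa' a s0 * (∑ a', p ω pa a' s0)) :
    cmi (fun (a : A) (pa : Pa) (w : Ω × St × S0) =>
        if f w.2.2 pa = w.2.1 then p w.1 pa a w.2.2 else 0) = 0 := by
  rw [cmi]
  refine Finset.sum_eq_zero fun a _ => Finset.sum_eq_zero fun pa _ => ?_
  rw [Fintype.sum_prod_type]
  refine Finset.sum_eq_zero fun ω _ => ?_
  rw [Fintype.sum_prod_type]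
  refine Finset.sum_eq_zero fun st _ => Finset.sum_eq_zero fun s0 _ => ?_
  dsimp only
  by_cases h : f s0 pa = st
  swap
  · simp [h]
  rw [if_pos h]
  by_cases hp0 : p ω pa a s0 = 0
  · simp [hp0]
  have hppos : 0 < p ω pa a s0 := lt_of_le_of_ne (hp_nonneg _ _ _ _) (Ne.symm hp0)
  have e1 : (∑ x' : A, ∑ y' : Pa, if f s0 y' = st then p ω y' x' s0 else 0)
      = mAw' f p ω st s0 := by
    rw [mAw', Finset.sum_comm]
    refine Finset.sum_congr rfl fun pa' _ => ?_
    by_cases hc : f s0 pa' = st <;> simp [hc, mAw]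
  have e2 : (∑ y' : Pa, if f s0 y' = st then p ω y' a s0 else 0) = mM f p ω a st s0 := rfl
  have e3 : (∑ x' : A, if f s0 pa = st then p ω pa x' s0 else 0) = mAw p ω pa s0 := by
    simp [mAw, h]
  rw [e1, e2, e3]
  have hkey := key_identity f p hmarkov ω a pa s0
  rw [h] at hkey
  have hM : 0 < mM f p ω a st s0 := by
    have := le_mM f hp_nonneg ω pa a s0; rw [h] at this; linarith
  have hA : 0 < mAw p ω pa s0 := lt_of_lt_of_le hppos (le_mAw hp_nonneg ω pa a s0)
  have : p ω pa a s0 * mAw' f p ω st s0 / (mM f p ω a st s0 * mAw p ω pa s0) = 1 := by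
    rw [← hkey]
    exact div_self (by positivity)
  rw [this, Real.log_one, mul_zero]

include hp_nonneg in
/-- The pointwise inequality behind the data-processing step. -/
lemma termwise
    (hmarkov : ∀ ω pa pa' a s0, f s0 pa = f s0 pa' →
      p ω pa a s0 * (∑ a', p ω pa' a' s0) = p ω pa' a s0 * (∑ a', p ω pa a' s0))
    (ω : Ω) (a : A) (pa : Pa) (s0 : S0) :
    p ω pa a s0 * Real.log ((p ω pa a s0 * mN p pa s0) / (mAw p ω pa s0 * mBa p a pa s0))
      + (p ω pa a s0 - p ω pa a s0 * mc f p a pa s0)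
    ≤ p ω pa a s0 * mG f p ω a (f s0 pa) s0 := by
  rcases eq_or_lt_of_le (hp_nonneg ω pa a s0) with hp0 | hp0
  · rw [← hp0]; simp
  have hAw : 0 < mAw p ω pa s0 := lt_of_lt_of_le hp0 (le_mAw hp_nonneg ω pa a s0)
  have hBa : 0 < mBa p a pa s0 := lt_of_lt_of_le hp0 (le_mBa hp_nonneg ω pa a s0)
  have hN : 0 < mN p pa s0 := lt_of_lt_of_le hAw (mAw_le_mN hp_nonneg ω pa s0)
  have hM : 0 < mM f p ω a (f s0 pa) s0 := lt_of_lt_of_le hp0 (le_mM f hp_nonneg ω pa a s0)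
  have hAw' : 0 < mAw' f p ω (f s0 pa) s0 := lt_of_lt_of_le hAw (mAw_le_mAw' f hp_nonneg ω pa s0)
  have hBa' : 0 < mBa' f p a (f s0 pa) s0 := lt_of_lt_of_le hBa (mBa_le_mBa' f hp_nonneg a pa s0)
  have hN' : 0 < mN' f p (f s0 pa) s0 := lt_of_lt_of_le hN (mN_le_mN' f hp_nonneg pa s0)
  have hkey := key_identity f p hmarkov ω a pa s0
  have hargq : 0 < (p ω pa a s0 * mN p pa s0) / (mAw p ω pa s0 * mBa p a pa s0) := by positivity
  have ht : 0 < (mN' f p (f s0 pa) s0 * mBa p a pa s0) /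
      (mN p pa s0 * mBa' f p a (f s0 pa) s0) := by positivity
  have hfactor : (mM f p ω a (f s0 pa) s0 * mN' f p (f s0 pa) s0) /
        (mAw' f p ω (f s0 pa) s0 * mBa' f p a (f s0 pa) s0)
      = ((p ω pa a s0 * mN p pa s0) / (mAw p ω pa s0 * mBa p a pa s0)) *
        ((mN' f p (f s0 pa) s0 * mBa p a pa s0) / (mN p pa s0 * mBa' f p a (f s0 pa) s0)) := by
    rw [div_mul_div_comm, div_eq_div_iff (by positivity) (by positivity)]
    linear_combination (mN' f p (f s0 pa) s0 * mBa p a pa s0 * mN p pa s0 *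
      mBa' f p a (f s0 pa) s0) * hkey
  rw [mG, hfactor, Real.log_mul (ne_of_gt hargq) (ne_of_gt ht)]
  have hinv : 1 / ((mN' f p (f s0 pa) s0 * mBa p a pa s0) /
        (mN p pa s0 * mBa' f p a (f s0 pa) s0))
      = mc f p a pa s0 := by
    rw [one_div, inv_div, mc]
  have hlog := aux_log_ge ht
  rw [hinv] at hlog
  have hmul := mul_le_mul_of_nonneg_left hlog hp0.le
  rw [mul_sub, mul_one] at hmul
  rw [mul_add]
  linarith

include hp_nonneg in
/-- The total correction mass is at most one. -/
lemma Z_le_one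
    (hp_sum : ∑ ω, ∑ pa, ∑ a, ∑ s0, p ω pa a s0 = 1) :
    ∑ ω, ∑ a, ∑ pa, ∑ s0, p ω pa a s0 * mc f p a pa s0 ≤ 1 := by
  have step0 : (∑ ω, ∑ a, ∑ pa, ∑ s0, p ω pa a s0 * mc f p a pa s0)
      = ∑ a, ∑ pa, ∑ s0, ∑ ω, p ω pa a s0 * mc f p a pa s0 := by
    rw [sum_comm3 (fun ω a pa => ∑ s0, p ω pa a s0 * mc f p a pa s0)]
    exact Finset.sum_congr rfl fun a _ => Finset.sum_congr rfl fun pa _ => Finset.sum_comm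
  rw [step0]
  have step1 : ∀ a pa s0, (∑ ω, p ω pa a s0 * mc f p a pa s0)
      = mBa p a pa s0 * mc f p a pa s0 := by
    intro a pa s0; rw [← Finset.sum_mul]; rfl
  have step2 : ∀ a pa s0, mBa p a pa s0 * mc f p a pa s0
      ≤ mN p pa s0 * (mBa' f p a (f s0 pa) s0 / mN' f p (f s0 pa) s0) := by
    intro a pa s0
    rw [mc]
    have := aux_mul_div_le (b := mBa p a pa s0) (x := mN p pa s0 * mBa' f p a (f s0 pa) s0)
      (y := mN' f p (f s0 pa) s0) (mBa_nonneg p hp_nonneg a pa s0)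
      (mul_nonneg (mN_nonneg p hp_nonneg pa s0) (mBa'_nonneg f p hp_nonneg a (f s0 pa) s0))
      (mN'_nonneg f p hp_nonneg (f s0 pa) s0)
    calc mBa p a pa s0 *
          (mN p pa s0 * mBa' f p a (f s0 pa) s0 / (mN' f p (f s0 pa) s0 * mBa p a pa s0))
        ≤ mN p pa s0 * mBa' f p a (f s0 pa) s0 / mN' f p (f s0 pa) s0 := this
      _ = mN p pa s0 * (mBa' f p a (f s0 pa) s0 / mN' f p (f s0 pa) s0) := mul_div_assoc _ _ _
  have step12 : (∑ a, ∑ pa, ∑ s0, ∑ ω, p ω pa a s0 * mc f p a pa s0)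
      ≤ ∑ a, ∑ s0, ∑ pa, mN p pa s0 * (mBa' f p a (f s0 pa) s0 / mN' f p (f s0 pa) s0) := by
    have : (∑ a, ∑ pa, ∑ s0, ∑ ω, p ω pa a s0 * mc f p a pa s0)
        ≤ ∑ a, ∑ pa, ∑ s0, mN p pa s0 * (mBa' f p a (f s0 pa) s0 / mN' f p (f s0 pa) s0) := by
      refine Finset.sum_le_sum fun a _ => Finset.sum_le_sum fun pa _ =>
        Finset.sum_le_sum fun s0 _ => ?_
      rw [step1]; exact step2 a pa s0
    refine le_trans this (le_of_eq ?_)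
    exact Finset.sum_congr rfl fun a _ => Finset.sum_comm
  refine le_trans step12 ?_
  have step4 : ∀ a s0, (∑ pa, mN p pa s0 * (mBa' f p a (f s0 pa) s0 / mN' f p (f s0 pa) s0))
      ≤ ∑ st, mBa' f p a st s0 := by
    intro a s0
    have e : (∑ st, (∑ pa, if f s0 pa = st then mN p pa s0 else 0) *
            (mBa' f p a st s0 / mN' f p st s0))
        = ∑ pa, mN p pa s0 * (mBa' f p a (f s0 pa) s0 / mN' f p (f s0 pa) s0) := by
      calc (∑ st, (∑ pa, if f s0 pa = st then mN p pa s0 else 0) *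
              (mBa' f p a st s0 / mN' f p st s0))
          = ∑ st, ∑ pa, if f s0 pa = st then
              mN p pa s0 * (mBa' f p a st s0 / mN' f p st s0) else 0 := by
            refine Finset.sum_congr rfl fun st _ => ?_
            rw [Finset.sum_mul]
            refine Finset.sum_congr rfl fun pa _ => ?_
            by_cases hc : f s0 pa = st <;> simp [hc]
        _ = ∑ pa, ∑ st, if f s0 pa = st then
              mN p pa s0 * (mBa' f p a st s0 / mN' f p st s0) else 0 := Finset.sum_comm
        _ = ∑ pa, mN p pa s0 * (mBa' f p a (f s0 pa) s0 / mN' f p (f s0 pa) s0) := by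
            refine Finset.sum_congr rfl fun pa _ => ?_
            simp
    rw [← e]
    refine Finset.sum_le_sum fun st _ => ?_
    have : (∑ pa, if f s0 pa = st then mN p pa s0 else 0) = mN' f p st s0 := rfl
    rw [this]
    exact aux_mul_div_le' (mBa'_nonneg f p hp_nonneg a st s0) (mN'_nonneg f p hp_nonneg st s0)
  have step5 : (∑ a, ∑ s0, ∑ st, mBa' f p a st s0) = 1 := by
    have e : ∀ (a : A) (s0 : S0), (∑ st, mBa' f p a st s0) = ∑ pa, mBa p a pa s0 := by
      intro a s0
      rw [show (∑ st, mBa' f p a st s0)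
          = ∑ st, ∑ pa, if f s0 pa = st then mBa p a pa s0 else 0 from rfl,
        Finset.sum_comm]
      refine Finset.sum_congr rfl fun pa _ => ?_
      simp
    calc (∑ a, ∑ s0, ∑ st, mBa' f p a st s0)
        = ∑ a, ∑ s0, ∑ pa, ∑ ω, p ω pa a s0 := by
          refine Finset.sum_congr rfl fun a _ => Finset.sum_congr rfl fun s0 _ => ?_
          rw [e a s0]; rfl
      _ = ∑ ω, ∑ pa, ∑ a, ∑ s0, p ω pa a s0 := by
          rw [show (∑ ω, ∑ pa, ∑ a, ∑ s0, p ω pa a s0)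
              = ∑ pa, ∑ a, ∑ ω, ∑ s0, p ω pa a s0 from
            sum_comm3 (fun ω pa a => ∑ s0, p ω pa a s0)]
          rw [show (∑ pa, ∑ a, ∑ ω, ∑ s0, p ω pa a s0)
              = ∑ pa, ∑ a, ∑ s0, ∑ ω, p ω pa a s0 from
            Finset.sum_congr rfl fun pa _ => Finset.sum_congr rfl fun a _ => Finset.sum_comm]
          rw [show (∑ a, ∑ s0, ∑ pa, ∑ ω, p ω pa a s0)
              = ∑ pa, ∑ a, ∑ s0, ∑ ω, p ω pa a s0 from
            (sum_comm3 (fun pa a s0 => ∑ ω, p ω pa a s0)).symm]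
      _ = 1 := hp_sum
  calc (∑ a, ∑ s0, ∑ pa, mN p pa s0 * (mBa' f p a (f s0 pa) s0 / mN' f p (f s0 pa) s0))
      ≤ ∑ a, ∑ s0, ∑ st, mBa' f p a st s0 :=
        Finset.sum_le_sum fun a _ => Finset.sum_le_sum fun s0 _ => step4 a s0
    _ = 1 := step5

end AuxLemmas

set_option maxHeartbeats 1000000 in
/-- Markov policy step of Lemma 1. `Pa` is the (finite) type of past action
sequences `A_{1:t-1}`; the current state is the deterministic function
`Sₜ = f(S₀, A_{1:t-1})`; and the policy is Markov:
`Aₜ ⟂ A_{1:t-1} | (Ω, Sₜ, S₀)` (equivalently, the conditional of `Aₜ` given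
`(Ω, past, S₀)` depends on the past only through `Sₜ`). Then
`I(Ω; Aₜ | A_{1:t-1}, S₀) ≤ I(Ω; Aₜ | Sₜ, S₀) + I(Aₜ; A_{1:t-1} | Ω, Sₜ, S₀)`,
the last term vanishes, and hence
`I(Ω; Aₜ | A_{1:t-1}, S₀) ≤ I(Ω; Aₜ | Sₜ, S₀)`. -/
theorem markov_policy_conditioning_step
    {Ω Pa A S0 St : Type*}
    [Fintype Ω] [Fintype Pa] [Fintype A] [Fintype S0] [Fintype St]
    [DecidableEq St]
    (f : S0 → Pa → St)
    (p : Ω → Pa → A → S0 → ℝ)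
    (hp_nonneg : ∀ ω pa a s0, 0 ≤ p ω pa a s0)
    (hp_sum : ∑ ω, ∑ pa, ∑ a, ∑ s0, p ω pa a s0 = 1)
    (hmarkov : ∀ ω pa pa' a s0, f s0 pa = f s0 pa' →
      p ω pa a s0 * (∑ a', p ω pa' a' s0)
        = p ω pa' a s0 * (∑ a', p ω pa a' s0)) :
    cmi (fun ω a (w : Pa × S0) => p ω w.1 a w.2)
        ≤ cmi (fun ω a (w : St × S0) =>
              ∑ pa, if f w.2 pa = w.1 then p ω pa a w.2 else 0)
          + cmi (fun (a : A) (pa : Pa) (w : Ω × St × S0) =>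
              if f w.2.2 pa = w.2.1 then p w.1 pa a w.2.2 else 0)
      ∧ cmi (fun (a : A) (pa : Pa) (w : Ω × St × S0) =>
              if f w.2.2 pa = w.2.1 then p w.1 pa a w.2.2 else 0) = 0
      ∧ cmi (fun ω a (w : Pa × S0) => p ω w.1 a w.2)
          ≤ cmi (fun ω a (w : St × S0) =>
              ∑ pa, if f w.2 pa = w.1 then p ω pa a w.2 else 0) := by
  have h2 := markov_cmi_zero f p hp_nonneg hmarkov
  have h3 : cmi (fun ω a (w : Pa × S0) => p ω w.1 a w.2)
      ≤ cmi (fun ω a (w : St × S0) => ∑ pa, if f w.2 pa = w.1 then p ω pa a w.2 else 0) := by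
    rw [hq1_eq p, hS_eq f p]
    have hterm : (∑ ω, ∑ a, ∑ pa, ∑ s0,
          (p ω pa a s0 * Real.log ((p ω pa a s0 * mN p pa s0) /
              (mAw p ω pa s0 * mBa p a pa s0))
            + (p ω pa a s0 - p ω pa a s0 * mc f p a pa s0)))
        ≤ ∑ ω, ∑ a, ∑ pa, ∑ s0, p ω pa a s0 * mG f p ω a (f s0 pa) s0 := by
      refine Finset.sum_le_sum fun ω _ => Finset.sum_le_sum fun a _ =>
        Finset.sum_le_sum fun pa _ => Finset.sum_le_sum fun s0 _ => ?_
      exact termwise f p hp_nonneg hmarkov ω a pa s0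
    have hsplit : (∑ ω, ∑ a, ∑ pa, ∑ s0,
          (p ω pa a s0 * Real.log ((p ω pa a s0 * mN p pa s0) /
              (mAw p ω pa s0 * mBa p a pa s0))
            + (p ω pa a s0 - p ω pa a s0 * mc f p a pa s0)))
        = (∑ ω, ∑ a, ∑ pa, ∑ s0, p ω pa a s0 * Real.log ((p ω pa a s0 * mN p pa s0) /
              (mAw p ω pa s0 * mBa p a pa s0)))
          + ((∑ ω, ∑ a, ∑ pa, ∑ s0, p ω pa a s0)
            - ∑ ω, ∑ a, ∑ pa, ∑ s0, p ω pa a s0 * mc f p a pa s0) := by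
      simp only [Finset.sum_add_distrib, Finset.sum_sub_distrib]
    have h1 : (∑ ω, ∑ a, ∑ pa, ∑ s0, p ω pa a s0) = 1 := by
      rw [show (∑ ω, ∑ a, ∑ pa, ∑ s0, p ω pa a s0)
          = ∑ ω, ∑ pa, ∑ a, ∑ s0, p ω pa a s0 from
        Finset.sum_congr rfl fun ω _ => Finset.sum_comm]
      exact hp_sum
    have hZ := Z_le_one f p hp_nonneg hp_sum
    linarith
  exact ⟨by rw [h2, add_zero]; exact h3, h2, h3⟩
end
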